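/- arXiv:1204.3032 — 4 statements merged into one kernel-verified Lean document; each statement's English description precedes it below -/
import Mathlib

section
/- Let csi, e_r, e_i, d_r, d_i, g_r, g_i be real numbers and let U ⊂ ℂ be open. Suppose M, ψ are holomorphic on U with M nowhere zero on U and satisfy on U the CGL5 traveling-wave system: M''/(2M) − (M')²/(4M²) − csi·M'/(2M) − ψ² + e_r·M² + d_r·M + g_i = 0 and ψ' + ψ·M'/M − csi·ψ + e_i·M² + d_i·M − g_r = 0. Set G = (1/2)·M·M'' − (1/4)·(M')² − (csi/2)·M·M' + e_r·M⁴ + d_r·M³ + g_i·M². Then on U: (i) ψ² = G/M²; (ii) (G' − 2·csi·G)² − 4·G·M²·(e_i·M² + d_i·M − g_r)² = 0; and (iii) at every point of U where e_i·M² + d_i·M − g_r ≠ 0 one has ψ = (2·csi·G − G')/(2·M²·(e_i·M² + d_i·M − g_r)). -/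
/-!
Multiplying the first equation by `M²` shows `G = (ψ M)²`, and the second equation says exactly
that `(ψ M)' = csi · ψ M − M · (e_i M² + d_i M − g_r)`. Hence
`G' = 2 csi G − 2 ψ M² (e_i M² + d_i M − g_r)`: squaring eliminates `ψ`, and solving for `ψ`
gives the last formula.
-/

theorem cgl5_G_eq_sq {K : Type*} [Field K] {c er dr gi m m' m'' p : K} (hm : m ≠ 0)
    (h : m'' / (2 * m) - m' ^ 2 / (4 * m ^ 2) - c * m' / (2 * m) - p ^ 2
      + er * m ^ 2 + dr * m + gi = 0) :
    1 / 2 * m * m'' - 1 / 4 * m' ^ 2 - c / 2 * m * m' + er * m ^ 4 + dr * m ^ 3 + gi * m ^ 2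
      = (p * m) ^ 2 := by
  -- `m²` times the equation, with the denominators cleared using only `m * m⁻¹ = 1`
  linear_combination m ^ 2 * h
    + (2⁻¹ * m * m' * c - 2⁻¹ * m * m'' + 4⁻¹ * m' ^ 2 * (m * m⁻¹ + 1)) * mul_inv_cancel₀ hm

theorem cgl5_hasDerivAt_mul {𝕜 : Type*} [NontriviallyNormedField 𝕜]
    {ψ M : 𝕜 → 𝕜} {z c e d g : 𝕜} (hψ : DifferentiableAt 𝕜 ψ z) (hM : DifferentiableAt 𝕜 M z)
    (hMz : M z ≠ 0)
    (h : deriv ψ z + ψ z * deriv M z / M z - c * ψ z + e * M z ^ 2 + d * M z - g = 0) :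
    HasDerivAt (fun w => ψ w * M w) (c * (ψ z * M z) - (e * M z ^ 2 + d * M z - g) * M z) z := by
  refine (hψ.hasDerivAt.mul hM.hasDerivAt).congr_deriv ?_
  have hψM : ψ z * deriv M z / M z * M z = ψ z * deriv M z := div_mul_cancel₀ _ hMz
  linear_combination M z * h - hψM

/-- Elimination of `ψ` from the CGL5 traveling-wave system: if `(M, ψ)` solves the
system on an open set `U` with `M` nowhere zero, then with
`G = (1/2) M M'' − (1/4) M'² − (csi/2) M M' + e_r M⁴ + d_r M³ + g_i M²` one has
`ψ² = G/M²`, the third-order ODE `(G' − 2 csi G)² − 4 G M² (e_i M² + d_i M − g_r)² = 0`,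
and `ψ = (2 csi G − G')/(2 M² (e_i M² + d_i M − g_r))` wherever the denominator is nonzero. -/
theorem cgl5_elimination_of_psi
    (csi e_r e_i d_r d_i g_r g_i : ℝ)
    (U : Set ℂ) (hU : IsOpen U)
    (M ψ : ℂ → ℂ)
    (hMa : ∀ z ∈ U, AnalyticAt ℂ M z) (hψa : ∀ z ∈ U, AnalyticAt ℂ ψ z)
    (hM0 : ∀ z ∈ U, M z ≠ 0)
    (heq1 : ∀ z ∈ U,
      deriv (deriv M) z / (2 * M z) - (deriv M z)^2 / (4 * (M z)^2)
        - (csi : ℂ) * deriv M z / (2 * M z) - (ψ z)^2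
        + (e_r : ℂ) * (M z)^2 + (d_r : ℂ) * M z + (g_i : ℂ) = 0)
    (heq2 : ∀ z ∈ U,
      deriv ψ z + ψ z * deriv M z / M z - (csi : ℂ) * ψ z
        + (e_i : ℂ) * (M z)^2 + (d_i : ℂ) * M z - (g_r : ℂ) = 0)
    (G : ℂ → ℂ)
    (hG : G = fun z => (1/2) * M z * deriv (deriv M) z - (1/4) * (deriv M z)^2
      - ((csi : ℂ)/2) * M z * deriv M z + (e_r : ℂ) * (M z)^4 + (d_r : ℂ) * (M z)^3
      + (g_i : ℂ) * (M z)^2) :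
    (∀ z ∈ U, (ψ z)^2 = G z / (M z)^2)
    ∧ (∀ z ∈ U,
        (deriv G z - 2 * (csi : ℂ) * G z)^2
          - 4 * G z * (M z)^2 * ((e_i : ℂ) * (M z)^2 + (d_i : ℂ) * M z - (g_r : ℂ))^2 = 0)
    ∧ (∀ z ∈ U, (e_i : ℂ) * (M z)^2 + (d_i : ℂ) * M z - (g_r : ℂ) ≠ 0 →
        ψ z = (2 * (csi : ℂ) * G z - deriv G z)
          / (2 * (M z)^2 * ((e_i : ℂ) * (M z)^2 + (d_i : ℂ) * M z - (g_r : ℂ)))) := by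
  have hG_sq : ∀ z ∈ U, G z = (ψ z * M z) ^ 2 := fun z hz => by
    rw [hG]
    exact cgl5_G_eq_sq (hM0 z hz) (heq1 z hz)
  have hG_deriv : ∀ z ∈ U, HasDerivAt G (2 * (ψ z * M z) * ((csi : ℂ) * (ψ z * M z)
      - ((e_i : ℂ) * (M z) ^ 2 + (d_i : ℂ) * M z - (g_r : ℂ)) * M z)) z := fun z hz => by
    have hψM := cgl5_hasDerivAt_mul (hψa z hz).differentiableAt (hMa z hz).differentiableAt
      (hM0 z hz) (heq2 z hz)
    refine ((hψM.pow 2).congr_of_eventuallyEq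
      (Filter.eventually_of_mem (hU.mem_nhds hz) hG_sq)).congr_deriv ?_
    ring
  refine ⟨fun z hz => ?_, fun z hz => ?_, fun z hz hQ => ?_⟩
  · rw [hG_sq z hz]
    field_simp [hM0 z hz]
  · rw [(hG_deriv z hz).deriv, hG_sq z hz]
    ring
  · rw [(hG_deriv z hz).deriv, hG_sq z hz,
      eq_div_iff (mul_ne_zero (mul_ne_zero two_ne_zero (pow_ne_zero 2 (hM0 z hz))) hQ)]
    ring
end

section
/- Let csi, e_r, e_i, d_r, d_i, g_r, g_i be real numbers with e_i ≠ 0, let ξ₁ ∈ ℂ, and let M, ψ be meromorphic on a neighborhood of ξ₁ and satisfy, on a punctured neighborhood of ξ₁, the CGL5 traveling-wave system: M''/(2M) − (M')²/(4M²) − csi·M'/(2M) − ψ² + e_r·M² + d_r·M + g_i = 0 and ψ' + ψ·M'/M − csi·ψ + e_i·M² + d_i·M − g_r = 0. If M has a pole at ξ₁, then: the pole of M at ξ₁ is simple; ψ has a simple pole at ξ₁; and writing m₀ for the residue of M at ξ₁, the residue of ψ at ξ₁ equals e_i·m₀²/2 and m₀ satisfies the quartic relation e_i²·m₀⁴ −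 4·e_r·m₀² − 3 = 0. In particular m₀ can take at most four distinct values. -/
open Filter Topology

/-!
Write `M = (z - ξ₁)ⁿ g` and `ψ = (z - ξ₁)ᵏ p` with `g`, `p` analytic and nonvanishing at `ξ₁`,
`n < 0`. In each equation the terms of lowest order in `z - ξ₁` must cancel (dominant balance).
In the second equation `ψ' + ψ M'/M` has leading term `(k + n) p(ξ₁) (z - ξ₁)^(k-1)`, which only
`e_i M² ~ e_i g(ξ₁)² (z - ξ₁)^(2n)` can balance; so `k = 2n + 1` and
`(3n + 1) p(ξ₁) = -e_i g(ξ₁)²`. In the first equation `ψ²` is then of order `4n + 2`, while all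
other terms are `O((z - ξ₁)^(2n))` or `O((z - ξ₁)⁻²)`; this forces `n = -1`, and the coefficients
of `(z - ξ₁)⁻²` give `p(ξ₁)² - e_r g(ξ₁)² = 3/4`, which with `p(ξ₁) = e_i g(ξ₁)²/2` is the quartic.
-/

/-- `f` has a pole at `z`. -/
def IsPole (f : ℂ → ℂ) (z : ℂ) : Prop :=
  Tendsto (fun w => ‖f w‖) (𝓝[≠] z) atTop

/-- `f z = c (z - x) ^ n + o((z - x) ^ n)` as `z → x`, `z ≠ x`. The coefficient `c` may be `0`. -/
def HasLeadingTermAt {𝕜 : Type*} [NontriviallyNormedField 𝕜] (f : 𝕜 → 𝕜) (x : 𝕜) (n : ℤ)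
    (c : 𝕜) : Prop :=
  Tendsto (fun z => (z - x) ^ (-n) * f z) (𝓝[≠] x) (𝓝 c)

section LeadingTerm

variable {𝕜 : Type*} [NontriviallyNormedField 𝕜] {f g : 𝕜 → 𝕜} {x c d : 𝕜} {n m : ℤ}

theorem hasLeadingTermAt_const (a x : 𝕜) : HasLeadingTermAt (fun _ => a) x 0 a := by
  simp [HasLeadingTermAt]

theorem hasLeadingTermAt_of_eventuallyEq (hg : ContinuousAt g x)
    (hf : f =ᶠ[𝓝[≠] x] fun z => (z - x) ^ n * g z) : HasLeadingTermAt f x n (g x) := by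
  refine (hg.tendsto.mono_left nhdsWithin_le_nhds).congr' ?_
  filter_upwards [hf, self_mem_nhdsWithin] with z hz hzx
  rw [hz, ← mul_assoc, ← zpow_add₀ (sub_ne_zero.2 hzx), neg_add_cancel, zpow_zero, one_mul]

theorem hasLeadingTermAt_neg_one_iff :
    HasLeadingTermAt f x (-1) c ↔ Tendsto (fun z => (z - x) * f z) (𝓝[≠] x) (𝓝 c) := by
  simp [HasLeadingTermAt]

namespace HasLeadingTermAt

theorem congr' (h : HasLeadingTermAt f x n c) (hfg : f =ᶠ[𝓝[≠] x] g) :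
    HasLeadingTermAt g x n c :=
  Tendsto.congr' (hfg.mono fun z hz => by simp only [hz]) h

theorem of_eq (h : HasLeadingTermAt f x n c) (hn : n = m) (hc : c = d) :
    HasLeadingTermAt f x m d :=
  hn ▸ hc ▸ h

theorem unique (h : HasLeadingTermAt f x n c) (h' : HasLeadingTermAt f x n d) : c = d :=
  tendsto_nhds_unique h h'

theorem add (hf : HasLeadingTermAt f x n c) (hg : HasLeadingTermAt g x n d) :
    HasLeadingTermAt (fun z => f z + g z) x n (c + d) :=
  (Tendsto.add hf hg).congr fun _ => (mul_add _ _ _).symm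

theorem neg (hf : HasLeadingTermAt f x n c) : HasLeadingTermAt (fun z => -f z) x n (-c) :=
  (Tendsto.neg hf).congr fun _ => (mul_neg _ _).symm

theorem sub (hf : HasLeadingTermAt f x n c) (hg : HasLeadingTermAt g x n d) :
    HasLeadingTermAt (fun z => f z - g z) x n (c - d) :=
  (Tendsto.sub hf hg).congr fun _ => (mul_sub _ _ _).symm

theorem const_mul (hf : HasLeadingTermAt f x n c) (a : 𝕜) :
    HasLeadingTermAt (fun z => a * f z) x n (a * c) :=
  (Tendsto.const_mul a hf).congr fun _ => mul_left_comm _ _ _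

theorem mul (hf : HasLeadingTermAt f x n c) (hg : HasLeadingTermAt g x m d) :
    HasLeadingTermAt (fun z => f z * g z) x (n + m) (c * d) := by
  refine (Tendsto.mul hf hg).congr' ?_
  filter_upwards [self_mem_nhdsWithin] with z hz
  rw [neg_add, zpow_add₀ (sub_ne_zero.2 hz)]
  ring

theorem pow (hf : HasLeadingTermAt f x n c) (k : ℕ) :
    HasLeadingTermAt (fun z => f z ^ k) x (k * n) (c ^ k) :=
  (Tendsto.pow hf k).congr fun z => by
    dsimp only
    rw [mul_pow, ← zpow_natCast, ← zpow_mul]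
    congr 2
    ring

theorem inv (hf : HasLeadingTermAt f x n c) (hc : c ≠ 0) :
    HasLeadingTermAt (fun z => (f z)⁻¹) x (-n) c⁻¹ :=
  (Tendsto.inv₀ hf hc).congr fun z => by rw [neg_neg, mul_inv, zpow_neg, inv_inv]

theorem div (hf : HasLeadingTermAt f x n c) (hg : HasLeadingTermAt g x m d) (hd : d ≠ 0) :
    HasLeadingTermAt (fun z => f z / g z) x (n - m) (c / d) := by
  simpa only [div_eq_mul_inv, sub_eq_add_neg] using hf.mul (hg.inv hd)

theorem zero_of_lt (hf : HasLeadingTermAt f x n c) (hmn : m < n) : HasLeadingTermAt f x m 0 := by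
  have hpow : Tendsto (fun z => (z - x) ^ (n - m)) (𝓝[≠] x) (𝓝 0) := by
    have hc : ContinuousAt (fun z => (z - x) ^ (n - m)) x :=
      (continuousAt_id.sub continuousAt_const).zpow₀ (n - m) (Or.inr (by omega))
    simpa [zero_zpow _ (by omega : n - m ≠ 0)] using hc.tendsto.mono_left nhdsWithin_le_nhds
  refine (zero_mul c ▸ hpow.mul hf).congr' ?_
  filter_upwards [self_mem_nhdsWithin] with z hz
  rw [← mul_assoc, ← zpow_add₀ (sub_ne_zero.2 hz)]
  ring_nf

theorem eq_zero_of_lt (hf : HasLeadingTermAt f x n c) (hf' : HasLeadingTermAt f x m d)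
    (hmn : m < n) : d = 0 :=
  hf'.unique (hf.zero_of_lt hmn)

end HasLeadingTermAt

end LeadingTerm

theorem isPole_iff_meromorphicOrderAt_neg {f : ℂ → ℂ} {x : ℂ} (hf : MeromorphicAt f x) :
    IsPole f x ↔ meromorphicOrderAt f x < 0 :=
  tendsto_norm_atTop_iff_cobounded.trans (tendsto_cobounded_iff_meromorphicOrderAt_neg hf)

theorem MeromorphicAt.exists_eventuallyEq_zpow_mul_of_isPole {f : ℂ → ℂ} {x : ℂ}
    (hf : MeromorphicAt f x) (hpole : IsPole f x) :
    ∃ n : ℤ, n < 0 ∧ ∃ g : ℂ → ℂ, AnalyticAt ℂ g x ∧ g x ≠ 0 ∧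
      f =ᶠ[𝓝[≠] x] fun z => (z - x) ^ n * g z := by
  have ho := (isPole_iff_meromorphicOrderAt_neg hf).1 hpole
  obtain ⟨n, hn⟩ := WithTop.ne_top_iff_exists.mp ho.ne_top
  obtain ⟨g, hg, hg0, hfg⟩ := (meromorphicOrderAt_eq_int_iff hf).1 hn.symm
  rw [← hn] at ho
  simp only [smul_eq_mul] at hfg
  exact ⟨n, by exact_mod_cast ho, g, hg, hg0, hfg⟩

section Derivative

variable {𝕜 : Type*} [NontriviallyNormedField 𝕜] [CompleteSpace 𝕜] {f g : 𝕜 → 𝕜} {x : 𝕜} {n : ℤ}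

theorem exists_deriv_eventuallyEq_zpow_mul (hg : AnalyticAt 𝕜 g x)
    (hf : f =ᶠ[𝓝[≠] x] fun z => (z - x) ^ n * g z) :
    ∃ G : 𝕜 → 𝕜, AnalyticAt 𝕜 G x ∧ G x = n * g x ∧
      deriv f =ᶠ[𝓝[≠] x] fun z => (z - x) ^ (n - 1) * G z := by
  refine ⟨fun z => n * g z + (z - x) * deriv g z, by fun_prop, by simp, ?_⟩
  filter_upwards [hf.nhdsNE_deriv, self_mem_nhdsWithin,
    nhdsWithin_le_nhds hg.eventually_analyticAt] with z hz hzx hgz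
  have hzx' : z - x ≠ 0 := sub_ne_zero.2 hzx
  have hpow : HasDerivAt (fun w => (w - x) ^ n) (n * (z - x) ^ (n - 1)) z :=
    (hasDerivAt_zpow n (z - x) (Or.inl hzx')).comp_sub_const z x
  rw [hz, (hpow.fun_mul hgz.differentiableAt.hasDerivAt).deriv,
    show (z - x) ^ n = (z - x) ^ (n - 1) * (z - x) by rw [← zpow_add_one₀ hzx', sub_add_cancel]]
  ring

theorem hasLeadingTermAt_deriv (hg : AnalyticAt 𝕜 g x)
    (hf : f =ᶠ[𝓝[≠] x] fun z => (z - x) ^ n * g z) :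
    HasLeadingTermAt (deriv f) x (n - 1) (n * g x) := by
  obtain ⟨G, hG, hGx, hfG⟩ := exists_deriv_eventuallyEq_zpow_mul hg hf
  exact hGx ▸ hasLeadingTermAt_of_eventuallyEq hG.continuousAt hfG

theorem hasLeadingTermAt_deriv_deriv (hg : AnalyticAt 𝕜 g x)
    (hf : f =ᶠ[𝓝[≠] x] fun z => (z - x) ^ n * g z) :
    HasLeadingTermAt (deriv (deriv f)) x (n - 2) (n * (n - 1) * g x) := by
  obtain ⟨G, hG, hGx, hfG⟩ := exists_deriv_eventuallyEq_zpow_mul hg hf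
  refine (hasLeadingTermAt_deriv hG hfG).of_eq (by ring) ?_
  rw [hGx]
  push_cast
  ring

end Derivative

section Expansion

variable {M ψ g p : ℂ → ℂ} {x c : ℂ} {n k : ℤ}

/-- With `L = M'/M ~ n / (z - x)` the function is `L'/2 + L²/4 - c L/2`, whence `-n/2 + n²/4`. -/
theorem hasLeadingTermAt_deriv_deriv_div_sub (hg : AnalyticAt ℂ g x) (hg0 : g x ≠ 0)
    (hM : M =ᶠ[𝓝[≠] x] fun z => (z - x) ^ n * g z) :
    HasLeadingTermAt (fun z => deriv (deriv M) z / (2 * M z) - deriv M z ^ 2 / (4 * M z ^ 2)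
      - c * deriv M z / (2 * M z)) x (-2) (n * (n - 2) / 4) := by
  have hM0 := hasLeadingTermAt_of_eventuallyEq hg.continuousAt hM
  have hM1 := hasLeadingTermAt_deriv hg hM
  have h2M : HasLeadingTermAt (fun z => 2 * M z) x n (2 * g x) := hM0.const_mul 2
  have hA := (hasLeadingTermAt_deriv_deriv hg hM).div h2M (by simpa using hg0)
  have hB := (hM1.pow 2).div ((hM0.pow 2).const_mul 4) (by simp [hg0])
  have hC := ((hM1.const_mul c).div h2M (by simpa using hg0)).zero_of_lt (m := -2) (by omega)
  refine (((hA.of_eq (by ring) rfl).sub (hB.of_eq (by push_cast; ring) rfl)).sub hC).of_eq rfl ?_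
  field_simp
  ring

theorem hasLeadingTermAt_deriv_add_mul_deriv_div_sub (hg : AnalyticAt ℂ g x) (hg0 : g x ≠ 0)
    (hM : M =ᶠ[𝓝[≠] x] fun z => (z - x) ^ n * g z) (hp : AnalyticAt ℂ p x)
    (hψ : ψ =ᶠ[𝓝[≠] x] fun z => (z - x) ^ k * p z) :
    HasLeadingTermAt (fun z => deriv ψ z + ψ z * deriv M z / M z - c * ψ z) x (k - 1)
      ((k + n) * p x) := by
  have hψ0 := hasLeadingTermAt_of_eventuallyEq hp.continuousAt hψ
  have hM0 := hasLeadingTermAt_of_eventuallyEq hg.continuousAt hM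
  have hB := (hψ0.mul (hasLeadingTermAt_deriv hg hM)).div hM0 hg0
  have hC := (hψ0.const_mul c).zero_of_lt (sub_one_lt k)
  refine (((hasLeadingTermAt_deriv hp hψ).add (hB.of_eq (by ring) rfl)).sub hC).of_eq rfl ?_
  field_simp
  ring

end Expansion

section TravelingWave

variable {M ψ g p : ℂ → ℂ} {x : ℂ} {n : ℤ}

theorem cgl5_psi_eventuallyEq_zpow_mul {csi e_i d_i g_r : ℂ} (he : e_i ≠ 0) (hn : n < 0)
    (hg : AnalyticAt ℂ g x) (hg0 : g x ≠ 0) (hM : M =ᶠ[𝓝[≠] x] fun z => (z - x) ^ n * g z)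
    (hψ : MeromorphicAt ψ x)
    (hsys : ∀ᶠ z in 𝓝[≠] x, deriv ψ z + ψ z * deriv M z / M z - csi * ψ z
      + e_i * M z ^ 2 + d_i * M z - g_r = 0) :
    ∃ p : ℂ → ℂ, AnalyticAt ℂ p x ∧ p x ≠ 0 ∧
      (ψ =ᶠ[𝓝[≠] x] fun z => (z - x) ^ (2 * n + 1) * p z) ∧
      (3 * n + 1) * p x = -(e_i * g x ^ 2) := by
  have hM0 := hasLeadingTermAt_of_eventuallyEq hg.continuousAt hM
  have hbal : HasLeadingTermAt (fun z => deriv ψ z + ψ z * deriv M z / M z - csi * ψ z) x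
      (2 * n) (-(e_i * g x ^ 2)) := by
    have hsq := (hM0.pow 2).const_mul e_i
    have hlin := (hM0.const_mul d_i).zero_of_lt (m := 2 * n) (by omega)
    have hconst := (hasLeadingTermAt_const g_r x).zero_of_lt (m := 2 * n) (by omega)
    refine (((hsq.add hlin).sub hconst).neg.of_eq (by push_cast; ring) (by ring)).congr' ?_
    filter_upwards [hsys] with z hz
    linear_combination -hz
  have hne : e_i * g x ^ 2 ≠ 0 := mul_ne_zero he (pow_ne_zero 2 hg0)
  cases hψo : meromorphicOrderAt ψ x with
  | top =>
    have hψ0 : ψ =ᶠ[𝓝[≠] x] fun z => (z - x) ^ (0 : ℤ) * 0 :=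
      (meromorphicOrderAt_eq_top_iff.1 hψo).mono fun z hz => by simp [hz]
    have hlead := hasLeadingTermAt_deriv_add_mul_deriv_div_sub (c := csi) hg hg0 hM
      analyticAt_const hψ0
    exact absurd (neg_eq_zero.1 (hlead.eq_zero_of_lt hbal (by omega))) hne
  | coe k =>
    obtain ⟨p, hp, hp0, hψp⟩ := (meromorphicOrderAt_eq_int_iff hψ).1 hψo
    simp only [smul_eq_mul] at hψp
    have hlead := hasLeadingTermAt_deriv_add_mul_deriv_div_sub (c := csi) hg hg0 hM hp hψp
    rcases lt_trichotomy (k - 1) (2 * n) with hlt | hk | hgt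
    · have hkn : ((k : ℂ) + n) ≠ 0 := by exact_mod_cast (by omega : k + n ≠ 0)
      exact absurd (hbal.eq_zero_of_lt hlead hlt) (mul_ne_zero hkn hp0)
    · obtain rfl : k = 2 * n + 1 := by omega
      refine ⟨p, hp, hp0, hψp, ?_⟩
      have := hlead.unique (hk ▸ hbal)
      push_cast at this
      linear_combination this
    · exact absurd (neg_eq_zero.1 (hlead.eq_zero_of_lt hbal hgt)) hne

theorem cgl5_order_eq_neg_one_of_first_eq {csi e_r d_r g_i : ℂ} (hn : n < 0)
    (hg : AnalyticAt ℂ g x) (hg0 : g x ≠ 0) (hM : M =ᶠ[𝓝[≠] x] fun z => (z - x) ^ n * g z)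
    (hp : AnalyticAt ℂ p x) (hp0 : p x ≠ 0) (hψ : ψ =ᶠ[𝓝[≠] x] fun z => (z - x) ^ (2 * n + 1) * p z)
    (hsys : ∀ᶠ z in 𝓝[≠] x, deriv (deriv M) z / (2 * M z) - deriv M z ^ 2 / (4 * M z ^ 2)
      - csi * deriv M z / (2 * M z) - ψ z ^ 2 + e_r * M z ^ 2 + d_r * M z + g_i = 0) :
    n = -1 ∧ p x ^ 2 - e_r * g x ^ 2 = 3 / 4 := by
  have hM0 := hasLeadingTermAt_of_eventuallyEq hg.continuousAt hM
  have hψ0 := hasLeadingTermAt_of_eventuallyEq hp.continuousAt hψ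
  have hR : HasLeadingTermAt (fun z => ψ z ^ 2 - e_r * M z ^ 2 - d_r * M z - g_i) x (-2)
      (n * (n - 2) / 4) := by
    refine (hasLeadingTermAt_deriv_deriv_div_sub (c := csi) hg hg0 hM).congr' ?_
    filter_upwards [hsys] with z hz
    linear_combination hz
  have hn1 : n = -1 := by
    by_contra hne
    have hR' := (((hψ0.pow 2).sub (((hM0.pow 2).const_mul e_r).zero_of_lt (by omega))).sub
      ((hM0.const_mul d_r).zero_of_lt (by omega))).sub
      ((hasLeadingTermAt_const g_i x).zero_of_lt (by omega))
    have hp2 := hR.eq_zero_of_lt hR' (by omega)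
    exact hp0 (pow_eq_zero_iff two_ne_zero |>.1 (by linear_combination hp2))
  subst hn1
  have hR' := ((((hψ0.pow 2).of_eq (m := -2) (by norm_num) rfl).sub
    (((hM0.pow 2).const_mul e_r).of_eq (m := -2) (by norm_num) rfl)).sub
    ((hM0.const_mul d_r).zero_of_lt (by omega))).sub
    ((hasLeadingTermAt_const g_i x).zero_of_lt (by omega))
  refine ⟨rfl, ?_⟩
  have := hR'.unique hR
  push_cast at this
  linear_combination this

end TravelingWave

/-- At a pole `ξ₁` of a meromorphic solution `(M, ψ)` of the CGL5 traveling-wave system,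
`M` has a simple pole with residue `m₀` satisfying `e_i² m₀⁴ − 4 e_r m₀² − 3 = 0`, and
`ψ` has a simple pole with residue `e_i m₀²/2`. -/
theorem cgl5_first_set_of_poles
    (csi e_r e_i d_r d_i g_r g_i : ℝ) (he : e_i ≠ 0) (ξ₁ : ℂ)
    (M ψ : ℂ → ℂ) (hM : MeromorphicAt M ξ₁) (hψ : MeromorphicAt ψ ξ₁)
    (heq : ∀ᶠ z in 𝓝[≠] ξ₁,
      (deriv (deriv M) z / (2 * M z) - (deriv M z)^2 / (4 * (M z)^2)
        - (csi : ℂ) * deriv M z / (2 * M z) - (ψ z)^2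
        + (e_r : ℂ) * (M z)^2 + (d_r : ℂ) * M z + (g_i : ℂ) = 0)
      ∧ (deriv ψ z + ψ z * deriv M z / M z - (csi : ℂ) * ψ z
        + (e_i : ℂ) * (M z)^2 + (d_i : ℂ) * M z - (g_r : ℂ) = 0))
    (hpole : IsPole M ξ₁) :
    ∃ m₀ : ℂ, m₀ ≠ 0
      ∧ Tendsto (fun z => (z - ξ₁) * M z) (𝓝[≠] ξ₁) (𝓝 m₀)
      ∧ IsPole ψ ξ₁
      ∧ Tendsto (fun z => (z - ξ₁) * ψ z) (𝓝[≠] ξ₁) (𝓝 ((e_i : ℂ) * m₀^2 / 2))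
      ∧ (e_i : ℂ)^2 * m₀^4 - 4 * (e_r : ℂ) * m₀^2 - 3 = 0 := by
  obtain ⟨n, hn, g, hg, hg0, hMg⟩ := hM.exists_eventuallyEq_zpow_mul_of_isPole hpole
  obtain ⟨p, hp, hp0, hψp, hres⟩ := cgl5_psi_eventuallyEq_zpow_mul
    (Complex.ofReal_ne_zero.2 he) hn hg hg0 hMg hψ (heq.mono fun _ h => h.2)
  obtain ⟨rfl, hquad⟩ := cgl5_order_eq_neg_one_of_first_eq hn hg hg0 hMg hp hp0 hψp
    (heq.mono fun _ h => h.1)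
  replace hψp : ψ =ᶠ[𝓝[≠] ξ₁] fun z => (z - ξ₁) ^ (-1 : ℤ) * p z := hψp
  have hpx : p ξ₁ = e_i * g ξ₁ ^ 2 / 2 := by
    push_cast at hres
    linear_combination -hres / 2
  refine ⟨g ξ₁, hg0, hasLeadingTermAt_neg_one_iff.1
    (hasLeadingTermAt_of_eventuallyEq hg.continuousAt hMg), ?_, ?_, ?_⟩
  · rw [isPole_iff_meromorphicOrderAt_neg hψ,
      (meromorphicOrderAt_eq_int_iff hψ).2 ⟨p, hp, hp0, by simp only [smul_eq_mul]; exact hψp⟩]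
    exact_mod_cast neg_one_lt_zero
  · exact hpx ▸ hasLeadingTermAt_neg_one_iff.1
      (hasLeadingTermAt_of_eventuallyEq hp.continuousAt hψp)
  · linear_combination 4 * hquad - 2 * (e_i * g ξ₁ ^ 2 + 2 * p ξ₁) * hpx
end

section
/- Let csi, e_r, e_i, d_r, d_i, g_r, g_i be real numbers, let ξ₂ ∈ ℂ, and let M, ψ be meromorphic on a neighborhood of ξ₂ and satisfy, on a punctured neighborhood of ξ₂, the CGL5 traveling-wave system: M''/(2M) − (M')²/(4M²) − csi·M'/(2M) − ψ² + e_r·M² + d_r·M + g_i = 0 and ψ' + ψ·M'/M − csi·ψ + e_i·M² + d_i·M − g_r = 0. If M is holomorphic at ξ₂ with M(ξ₂) = 0, M is not identically zero, and ψ has a pole at ξ₂, then: the zero of M at ξ₂ is simple; the pole of ψ at ξ₂ is simple; and the residue ρ of ψ at ξ₂ satisfies ρ² = −1/4, i.e. ρ = i/2 or ρ = −i/2. -/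
/-!
Write `M = (z - ξ)^p g` with `g ξ ≠ 0`, so that `L = M'/M = p/(z - ξ) + u` with `u` holomorphic
at `ξ`. Since `M''/M = L' + L²`, the first equation reads `ψ² = L'/2 + L²/4 - csi L/2 + O(1)`,
whence `((z - ξ) ψ)² → (p² - 2p)/4`. A meromorphic `ψ` with a pole for which this square stays
bounded has a simple pole: `(z - ξ) ψ = h` with `h` holomorphic and `h ξ ≠ 0`. Multiplying the
second equation by `(z - ξ)²` gives `(p - 1) h + O(z - ξ) = 0`, so `p = 1`, and the residue
`h ξ` satisfies `h ξ ^ 2 = (1 - 2)/4 = -1/4`.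
-/

open Filter Topology

theorem IsPole.meromorphicOrderAt_neg {f : ℂ → ℂ} {z : ℂ} (hpole : IsPole f z)
    (hf : MeromorphicAt f z) : meromorphicOrderAt f z < 0 :=
  (tendsto_cobounded_iff_meromorphicOrderAt_neg hf).mp
    (tendsto_norm_atTop_iff_cobounded.mp hpole)

section
variable {𝕜 : Type*} [NontriviallyNormedField 𝕜] {f g ψ : 𝕜 → 𝕜} {x z : 𝕜}

theorem deriv_logDeriv (hf : DifferentiableAt 𝕜 f z) (hf' : DifferentiableAt 𝕜 (deriv f) z)
    (hz : f z ≠ 0) :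
    deriv (logDeriv f) z = deriv (deriv f) z / f z - logDeriv f z ^ 2 := by
  rw [logDeriv, deriv_div hf' hf hz]
  simp only [Pi.div_apply]
  field_simp

theorem logDeriv_sub_pow_mul (p : ℕ) (hz : z ≠ x) (hg : DifferentiableAt 𝕜 g z)
    (hgz : g z ≠ 0) :
    logDeriv (fun w => (w - x) ^ p * g w) z = p / (z - x) + logDeriv g z := by
  have hzx : z - x ≠ 0 := sub_ne_zero.mpr hz
  rw [logDeriv_mul (f := fun w => (w - x) ^ p) z (pow_ne_zero p hzx) hgz (by fun_prop) hg,
    logDeriv_fun_pow (f := (· - x)) (by fun_prop) p]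
  simp [logDeriv_apply, div_eq_mul_inv]

theorem tendsto_of_eventuallyEq_add_sub_mul {F R : 𝕜 → 𝕜} {c : 𝕜}
    (hF : ∀ᶠ z in 𝓝[≠] x, F z = c + (z - x) * R z) (hR : ContinuousAt R x) :
    Tendsto F (𝓝[≠] x) (𝓝 c) := by
  have hcont : ContinuousAt (fun z => c + (z - x) * R z) x := by fun_prop
  have := hcont.tendsto.mono_left (nhdsWithin_le_nhds (s := {x}ᶜ))
  rw [sub_self, zero_mul, add_zero] at this
  exact this.congr' (hF.mono fun _ hz => hz.symm)

theorem exists_analyticAt_eventuallyEq_sub_mul_of_tendsto_sq (hψ : MeromorphicAt ψ x)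
    (hneg : meromorphicOrderAt ψ x < 0) {c : 𝕜}
    (hlim : Tendsto (fun z => ((z - x) * ψ z) ^ 2) (𝓝[≠] x) (𝓝 c)) :
    ∃ h : 𝕜 → 𝕜, AnalyticAt 𝕜 h x ∧ h x ≠ 0 ∧ ∀ᶠ z in 𝓝[≠] x, (z - x) * ψ z = h z := by
  have hφ : MeromorphicAt (fun z => (z - x) * ψ z) x := by fun_prop
  have hmul : meromorphicOrderAt (fun z => (z - x) * ψ z) x = 1 + meromorphicOrderAt ψ x := by
    rw [fun_meromorphicOrderAt_mul (by fun_prop) hψ, meromorphicOrderAt_id_sub_const]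
  have hsq := (tendsto_nhds_iff_meromorphicOrderAt_nonneg (hφ.pow 2)).mp ⟨c, hlim⟩
  rw [meromorphicOrderAt_pow hφ, hmul] at hsq
  have hord : meromorphicOrderAt (fun z => (z - x) * ψ z) x = (0 : ℤ) := by
    rw [hmul]
    lift meromorphicOrderAt ψ x to ℤ using hneg.ne_top with n
    have hsq' : (0 : ℤ) ≤ 2 * (1 + n) := by
      rw [show ((2 : ℕ) : WithTop ℤ) = ((2 : ℤ) : WithTop ℤ) from rfl] at hsq
      exact_mod_cast hsq
    norm_cast at hneg ⊢
    omega
  obtain ⟨h, hh, hhx, hφh⟩ := (meromorphicOrderAt_eq_int_iff hφ).mp hord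
  exact ⟨h, hh, hhx, hφh.mono fun z hz => by simpa using hz⟩

variable [CompleteSpace 𝕜]

theorem logDeriv_eventuallyEq_of_eventuallyEq_sub_pow_mul {p : ℕ} (hg : AnalyticAt 𝕜 g x)
    (hgx : g x ≠ 0) (hf : f =ᶠ[𝓝 x] fun z => (z - x) ^ p * g z) :
    logDeriv f =ᶠ[𝓝[≠] x] fun z => p / (z - x) + logDeriv g z := by
  filter_upwards [logDeriv_congr_nhdsNE (hf.filter_mono nhdsWithin_le_nhds), self_mem_nhdsWithin,
    (hg.eventually_analyticAt.and (hg.continuousAt.eventually_ne hgx)).filter_mono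
      nhdsWithin_le_nhds] with z hfz hz ⟨hgz, hgz0⟩
  rw [hfz, logDeriv_sub_pow_mul p hz hgz.differentiableAt hgz0]

theorem deriv_logDeriv_eventuallyEq_of_eventuallyEq_sub_pow_mul {p : ℕ}
    (hg : AnalyticAt 𝕜 g x) (hgx : g x ≠ 0) (hf : f =ᶠ[𝓝 x] fun z => (z - x) ^ p * g z) :
    deriv (logDeriv f) =ᶠ[𝓝[≠] x] fun z => -p / (z - x) ^ 2 + deriv (logDeriv g) z := by
  have hu : AnalyticAt 𝕜 (logDeriv g) x := hg.deriv.div hg hgx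
  filter_upwards [(logDeriv_eventuallyEq_of_eventuallyEq_sub_pow_mul hg hgx hf).nhdsNE_deriv,
    self_mem_nhdsWithin, hu.eventually_analyticAt.filter_mono nhdsWithin_le_nhds]
    with z hfz hz huz
  have hinv : HasDerivAt (fun w => (p : 𝕜) / (w - x)) (-p / (z - x) ^ 2) z := by
    simpa [div_eq_mul_inv, neg_div] using
      (((hasDerivAt_id z).sub_const x).inv (sub_ne_zero.mpr hz)).const_mul (p : 𝕜)
  exact hfz.trans (hinv.add huz.differentiableAt.hasDerivAt).deriv

theorem deriv_eventuallyEq_of_eventuallyEq_sub_mul {h : 𝕜 → 𝕜} (hh : AnalyticAt 𝕜 h x)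
    (hψ : ∀ᶠ z in 𝓝[≠] x, (z - x) * ψ z = h z) :
    deriv ψ =ᶠ[𝓝[≠] x] fun z => deriv h z / (z - x) - h z / (z - x) ^ 2 := by
  have hψ' : ψ =ᶠ[𝓝[≠] x] fun z => h z / (z - x) := by
    filter_upwards [hψ, self_mem_nhdsWithin] with z hz hzx
    rw [← hz, mul_div_cancel_left₀ _ (sub_ne_zero.mpr hzx)]
  filter_upwards [hψ'.nhdsNE_deriv, self_mem_nhdsWithin,
    hh.eventually_analyticAt.filter_mono nhdsWithin_le_nhds] with z hz hzx hhz
  have hzx' : z - x ≠ 0 := sub_ne_zero.mpr hzx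
  rw [hz, deriv_fun_div hhz.differentiableAt (by fun_prop) hzx', deriv_sub_const, deriv_id'']
  field_simp

end

noncomputable def cgl5Lhs₁ (csi e_r d_r g_i : ℂ) (M ψ : ℂ → ℂ) (z : ℂ) : ℂ :=
  deriv (deriv M) z / (2 * M z) - (deriv M z)^2 / (4 * (M z)^2)
    - csi * deriv M z / (2 * M z) - (ψ z)^2 + e_r * (M z)^2 + d_r * M z + g_i

noncomputable def cgl5Lhs₂ (csi e_i d_i g_r : ℂ) (M ψ : ℂ → ℂ) (z : ℂ) : ℂ :=
  deriv ψ z + ψ z * deriv M z / M z - csi * ψ z + e_i * (M z)^2 + d_i * M z - g_r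

section
variable {csi e_r d_r g_i e_i d_i g_r : ℂ} {M ψ g h : ℂ → ℂ} {ξ : ℂ} {p : ℕ}

theorem cgl5Lhs₁_eq (hM : AnalyticAt ℂ M ξ) (hMξ : M ξ ≠ 0) :
    cgl5Lhs₁ csi e_r d_r g_i M ψ ξ = deriv (logDeriv M) ξ / 2 + logDeriv M ξ ^ 2 / 4
      - csi * logDeriv M ξ / 2 - ψ ξ ^ 2 + e_r * M ξ ^ 2 + d_r * M ξ + g_i := by
  rw [deriv_logDeriv hM.differentiableAt hM.deriv.differentiableAt hMξ]
  simp only [cgl5Lhs₁, logDeriv_apply]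
  ring

theorem tendsto_sq_sub_mul_of_cgl5Lhs₁ (hg : AnalyticAt ℂ g ξ) (hgξ : g ξ ≠ 0)
    (hM : M =ᶠ[𝓝 ξ] fun z => (z - ξ) ^ p * g z)
    (h₁ : ∀ᶠ z in 𝓝[≠] ξ, cgl5Lhs₁ csi e_r d_r g_i M ψ z = 0) :
    Tendsto (fun z => ((z - ξ) * ψ z) ^ 2) (𝓝[≠] ξ) (𝓝 ((p ^ 2 - 2 * p) / 4)) := by
  set u := logDeriv g
  have hu : AnalyticAt ℂ u ξ := hg.deriv.div hg hgξ
  have hMa : AnalyticAt ℂ M ξ :=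
    (by fun_prop : AnalyticAt ℂ (fun z => (z - ξ) ^ p * g z) ξ).congr hM.symm
  have hM0 : ∀ᶠ z in 𝓝[≠] ξ, M z ≠ 0 := by
    filter_upwards [hM.filter_mono nhdsWithin_le_nhds, self_mem_nhdsWithin,
      (hg.continuousAt.eventually_ne hgξ).filter_mono nhdsWithin_le_nhds] with z hMz hz hgz
    rw [hMz]
    exact mul_ne_zero (pow_ne_zero p (sub_ne_zero.mpr hz)) hgz
  refine tendsto_of_eventuallyEq_add_sub_mul (R := fun z => p * u z / 2
      + (z - ξ) * (deriv u z / 2 + u z ^ 2 / 4) - csi * (p + (z - ξ) * u z) / 2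
      + (z - ξ) * (e_r * M z ^ 2 + d_r * M z + g_i)) ?_ (by
    have := hu.continuousAt; have := hu.deriv.continuousAt; have := hMa.continuousAt
    fun_prop)
  filter_upwards [h₁, hM0, self_mem_nhdsWithin,
    hMa.eventually_analyticAt.filter_mono nhdsWithin_le_nhds,
    logDeriv_eventuallyEq_of_eventuallyEq_sub_pow_mul hg hgξ hM,
    deriv_logDeriv_eventuallyEq_of_eventuallyEq_sub_pow_mul hg hgξ hM]
    with z h₁z hMz hz hMaz hL hL'
  rw [cgl5Lhs₁_eq hMaz hMz, hL, hL'] at h₁z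
  have hzξ : z - ξ ≠ 0 := sub_ne_zero.mpr hz
  field_simp at h₁z
  linear_combination -h₁z / 8

theorem eq_one_of_cgl5Lhs₂ (hg : AnalyticAt ℂ g ξ) (hgξ : g ξ ≠ 0)
    (hM : M =ᶠ[𝓝 ξ] fun z => (z - ξ) ^ p * g z) (hh : AnalyticAt ℂ h ξ) (hhξ : h ξ ≠ 0)
    (hψ : ∀ᶠ z in 𝓝[≠] ξ, (z - ξ) * ψ z = h z)
    (h₂ : ∀ᶠ z in 𝓝[≠] ξ, cgl5Lhs₂ csi e_i d_i g_r M ψ z = 0) :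
    p = 1 := by
  set u := logDeriv g
  have hu : AnalyticAt ℂ u ξ := hg.deriv.div hg hgξ
  have hMa : AnalyticAt ℂ M ξ :=
    (by fun_prop : AnalyticAt ℂ (fun z => (z - ξ) ^ p * g z) ξ).congr hM.symm
  have hlim : Tendsto (fun z => ((p : ℂ) - 1) * h z) (𝓝[≠] ξ) (𝓝 0) := by
    refine tendsto_of_eventuallyEq_add_sub_mul (R := fun z => -(deriv h z + h z * u z
        - csi * h z + (z - ξ) * (e_i * M z ^ 2 + d_i * M z - g_r))) ?_ (by
      have := hu.continuousAt; have := hh.deriv.continuousAt; have := hh.continuousAt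
      have := hMa.continuousAt
      fun_prop)
    filter_upwards [h₂, hψ, self_mem_nhdsWithin,
      deriv_eventuallyEq_of_eventuallyEq_sub_mul hh hψ,
      logDeriv_eventuallyEq_of_eventuallyEq_sub_pow_mul hg hgξ hM] with z h₂z hψz hz hψ' hL
    have hzξ : z - ξ ≠ 0 := sub_ne_zero.mpr hz
    have hψz' : ψ z = h z / (z - ξ) := by rw [← hψz, mul_div_cancel_left₀ _ hzξ]
    rw [cgl5Lhs₂, mul_div_assoc, ← logDeriv_apply, hL, hψ', hψz'] at h₂z
    field_simp at h₂z
    linear_combination h₂z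
  have hval : ((p : ℂ) - 1) * h ξ = 0 :=
    tendsto_nhds_unique ((hh.continuousAt.const_mul _).tendsto.mono_left nhdsWithin_le_nhds) hlim
  have hp : (p : ℂ) = 1 := by linear_combination (mul_eq_zero.mp hval).resolve_right hhξ
  exact_mod_cast hp

end

theorem cgl5_second_set_of_singularities_general
    (csi e_r e_i d_r d_i g_r g_i : ℝ) (ξ₂ : ℂ)
    (M ψ : ℂ → ℂ) (hψ : MeromorphicAt ψ ξ₂)
    (heq : ∀ᶠ z in 𝓝[≠] ξ₂,
      (deriv (deriv M) z / (2 * M z) - (deriv M z)^2 / (4 * (M z)^2)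
        - (csi : ℂ) * deriv M z / (2 * M z) - (ψ z)^2
        + (e_r : ℂ) * (M z)^2 + (d_r : ℂ) * M z + (g_i : ℂ) = 0)
      ∧ (deriv ψ z + ψ z * deriv M z / M z - (csi : ℂ) * ψ z
        + (e_i : ℂ) * (M z)^2 + (d_i : ℂ) * M z - (g_r : ℂ) = 0))
    (hMa : AnalyticAt ℂ M ξ₂)
    (hMne : ¬ (∀ᶠ z in 𝓝 ξ₂, M z = 0))
    (hpole : IsPole ψ ξ₂) :
    deriv M ξ₂ ≠ 0
    ∧ ∃ ρ : ℂ, Tendsto (fun z => (z - ξ₂) * ψ z) (𝓝[≠] ξ₂) (𝓝 ρ)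
        ∧ ρ^2 = -(1/4)
        ∧ (ρ = Complex.I / 2 ∨ ρ = -(Complex.I / 2)) := by
  obtain ⟨p, g, hg, hgξ, hM⟩ := hMa.exists_eventuallyEq_pow_smul_nonzero_iff.mpr hMne
  replace hM : M =ᶠ[𝓝 ξ₂] fun z => (z - ξ₂) ^ p * g z := hM
  have hlim := tendsto_sq_sub_mul_of_cgl5Lhs₁ hg hgξ hM (heq.mono fun _ hz => hz.1)
  obtain ⟨h, hh, hhξ, hψh⟩ :=
    exists_analyticAt_eventuallyEq_sub_mul_of_tendsto_sq hψ (hpole.meromorphicOrderAt_neg hψ) hlim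
  obtain rfl : p = 1 := eq_one_of_cgl5Lhs₂ hg hgξ hM hh hhξ hψh (heq.mono fun _ hz => hz.2)
  have hρ : Tendsto (fun z => (z - ξ₂) * ψ z) (𝓝[≠] ξ₂) (𝓝 (h ξ₂)) :=
    (hh.continuousAt.tendsto.mono_left nhdsWithin_le_nhds).congr' (hψh.mono fun _ hz => hz.symm)
  have hρ2 : h ξ₂ ^ 2 = -(1 / 4) := by
    rw [tendsto_nhds_unique (hρ.pow 2) hlim]
    norm_num
  have hdM : deriv M ξ₂ = g ξ₂ := by
    rw [hM.deriv_eq]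
    simp [hg.differentiableAt]
  refine ⟨hdM ▸ hgξ, h ξ₂, hρ, hρ2, sq_eq_sq_iff_eq_or_eq_neg.mp ?_⟩
  rw [hρ2, div_pow, Complex.I_sq]
  norm_num

/-- At a zero `ξ₂` of `M` which is a pole of `ψ`, for a meromorphic solution `(M, ψ)` of
the CGL5 traveling-wave system: the zero of `M` is simple, the pole of `ψ` is simple, and
the residue `ρ` of `ψ` satisfies `ρ² = −1/4`, i.e. `ρ = ±i/2`. -/
theorem cgl5_second_set_of_singularities
    (csi e_r e_i d_r d_i g_r g_i : ℝ) (ξ₂ : ℂ)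
    (M ψ : ℂ → ℂ) (hM : MeromorphicAt M ξ₂) (hψ : MeromorphicAt ψ ξ₂)
    (heq : ∀ᶠ z in 𝓝[≠] ξ₂,
      (deriv (deriv M) z / (2 * M z) - (deriv M z)^2 / (4 * (M z)^2)
        - (csi : ℂ) * deriv M z / (2 * M z) - (ψ z)^2
        + (e_r : ℂ) * (M z)^2 + (d_r : ℂ) * M z + (g_i : ℂ) = 0)
      ∧ (deriv ψ z + ψ z * deriv M z / M z - (csi : ℂ) * ψ z
        + (e_i : ℂ) * (M z)^2 + (d_i : ℂ) * M z - (g_r : ℂ) = 0))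
    (hMa : AnalyticAt ℂ M ξ₂) (hM0 : M ξ₂ = 0)
    (hMne : ¬ (∀ᶠ z in 𝓝 ξ₂, M z = 0))
    (hpole : IsPole ψ ξ₂) :
    deriv M ξ₂ ≠ 0
    ∧ ∃ ρ : ℂ, Tendsto (fun z => (z - ξ₂) * ψ z) (𝓝[≠] ξ₂) (𝓝 ρ)
        ∧ ρ^2 = -(1/4)
        ∧ (ρ = Complex.I / 2 ∨ ρ = -(Complex.I / 2)) :=
  cgl5_second_set_of_singularities_general csi e_r e_i d_r d_i g_r g_i ξ₂ M ψ hψ heq hMa hMne hpole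
end

section
/- Let g₂, g₃ ∈ ℂ and e₁ ∈ ℂ with 4·e₁³ − g₂·e₁ − g₃ = 0. Let U ⊂ ℂ be open and connected, and let ℘₁ be a nonconstant holomorphic function on U satisfying (℘₁')² = 4·℘₁³ − g₂·℘₁ − g₃. Then the function f = ℘₁ − (g₂ − 12·e₁²)/(4·(℘₁ − e₁)), defined at points where ℘₁ ≠ e₁, satisfies (f')² = 4·f³ − G₂·f − G₃ with G₂ = 60·e₁² − 4·g₂ and G₃ = 88·e₁³ − 8·e₁·g₂. -/
/-! By the chain rule `f' = ℘₁' · (1 + c / (4 (℘₁ − e₁)²))` with `c = g₂ − 12 e₁²`. Squaring and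
substituting the cubic for `℘₁'²`, both sides become rational functions of `℘₁` alone; after
clearing `(℘₁ − e₁)⁶` they agree modulo the relation `4 e₁³ − g₂ e₁ − g₃ = 0`. -/

theorem HasDerivAt.sub_div_mul_sub {𝕜 : Type*} [NontriviallyNormedField 𝕜] {p : 𝕜 → 𝕜}
    {p' a : 𝕜} (c e : 𝕜) {z : 𝕜} (hp : HasDerivAt p p' z) (ha : a ≠ 0) (hpe : p z ≠ e) :
    HasDerivAt (fun w => p w - c / (a * (p w - e)))
      (p' * (1 + c / (a * (p z - e) ^ 2))) z := by
  have hx : p z - e ≠ 0 := sub_ne_zero.mpr hpe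
  have hq : HasDerivAt (fun w => c / (a * (p w - e))) _ z :=
    (hasDerivAt_const z c).div ((hp.sub_const e).const_mul a) (mul_ne_zero ha hx)
  refine (hp.sub hq).congr_deriv ?_
  field_simp
  ring

theorem landen_sq_eq_cubic {K : Type*} [Field K] (h2 : (2 : K) ≠ 0) {g₂ g₃ e p p' : K}
    (he : 4 * e ^ 3 - g₂ * e - g₃ = 0) (hp : p' ^ 2 = 4 * p ^ 3 - g₂ * p - g₃) (hpe : p ≠ e) :
    (p' * (1 + (g₂ - 12 * e ^ 2) / (4 * (p - e) ^ 2))) ^ 2 =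
      4 * (p - (g₂ - 12 * e ^ 2) / (4 * (p - e))) ^ 3
        - (60 * e ^ 2 - 4 * g₂) * (p - (g₂ - 12 * e ^ 2) / (4 * (p - e)))
        - (88 * e ^ 3 - 8 * e * g₂) := by
  have hx : p - e ≠ 0 := sub_ne_zero.mpr hpe
  have h4 : (4 : K) ≠ 0 := by
    simpa [show (4 : K) = 2 * 2 by norm_num] using h2
  field_simp
  linear_combination (4 * (p - e) ^ 2 + (g₂ - 12 * e ^ 2)) ^ 2 * (hp + he)

theorem landen_transformation_weierstrass_general
    (g₂ g₃ e₁ : ℂ) (he : 4 * e₁^3 - g₂ * e₁ - g₃ = 0)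
    (U : Set ℂ)
    (℘₁ : ℂ → ℂ) (h℘ : ∀ z ∈ U, AnalyticAt ℂ ℘₁ z)
    (hode : ∀ z ∈ U, (deriv ℘₁ z)^2 = 4 * (℘₁ z)^3 - g₂ * ℘₁ z - g₃)
    (f : ℂ → ℂ)
    (hf : f = fun z => ℘₁ z - (g₂ - 12 * e₁^2) / (4 * (℘₁ z - e₁)))
    (G₂ G₃ : ℂ)
    (hG₂ : G₂ = 60 * e₁^2 - 4 * g₂) (hG₃ : G₃ = 88 * e₁^3 - 8 * e₁ * g₂) :
    ∀ z ∈ U, ℘₁ z ≠ e₁ →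
      (deriv f z)^2 = 4 * (f z)^3 - G₂ * f z - G₃ := by
  intro z hz hpe
  have hfD : HasDerivAt f
      (deriv ℘₁ z * (1 + (g₂ - 12 * e₁ ^ 2) / (4 * (℘₁ z - e₁) ^ 2))) z := by
    rw [hf]
    exact (h℘ z hz).differentiableAt.hasDerivAt.sub_div_mul_sub _ _ (by norm_num) hpe
  rw [hfD.deriv, hf, hG₂, hG₃]
  exact landen_sq_eq_cubic two_ne_zero he (hode z hz) hpe

/-- Landen transformation at the level of the Weierstrass function: if `℘₁` satisfies
`(℘₁')² = 4℘₁³ − g₂℘₁ − g₃` and `e₁` is a root of `4t³ − g₂t − g₃`, then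
`f = ℘₁ − (g₂ − 12e₁²)/(4(℘₁ − e₁))` satisfies `(f')² = 4f³ − G₂f − G₃` with
`G₂ = 60e₁² − 4g₂` and `G₃ = 88e₁³ − 8e₁g₂`. -/
theorem landen_transformation_weierstrass
    (g₂ g₃ e₁ : ℂ) (he : 4 * e₁^3 - g₂ * e₁ - g₃ = 0)
    (U : Set ℂ) (hU : IsOpen U) (hUc : IsConnected U)
    (℘₁ : ℂ → ℂ) (h℘ : ∀ z ∈ U, AnalyticAt ℂ ℘₁ z)
    (hnc : ¬ ∀ z ∈ U, ∀ w ∈ U, ℘₁ z = ℘₁ w)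
    (hode : ∀ z ∈ U, (deriv ℘₁ z)^2 = 4 * (℘₁ z)^3 - g₂ * ℘₁ z - g₃)
    (f : ℂ → ℂ)
    (hf : f = fun z => ℘₁ z - (g₂ - 12 * e₁^2) / (4 * (℘₁ z - e₁)))
    (G₂ G₃ : ℂ)
    (hG₂ : G₂ = 60 * e₁^2 - 4 * g₂) (hG₃ : G₃ = 88 * e₁^3 - 8 * e₁ * g₂) :
    ∀ z ∈ U, ℘₁ z ≠ e₁ →
      (deriv f z)^2 = 4 * (f z)^3 - G₂ * f z - G₃ :=
  landen_transformation_weierstrass_general g₂ g₃ e₁ he U ℘₁ h℘ hode f hf G₂ G₃ hG₂ hG₃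
end
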